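/- arXiv:2103.13765 — 4 statements merged into one kernel-verified Lean document; each statement's English description precedes it below -/
import Mathlib

section
/- Let R be a commutative ring and S a commutative R-algebra that is faithfully flat as an R-module. Let M be a finitely generated R-module such that S ⊗_R M is finitely presented as an S-module. Then M is finitely presented as an R-module. -/
open TensorProduct

/-- Flatness identifies the kernel of the base change of `f` with `S ⊗[R] ker f`. -/
theorem LinearMap.fg_ker_of_fg_ker_baseChange {R S N P : Type*} [CommRing R] [CommRing S]
    [Algebra R S] [Module.FaithfullyFlat R S] [AddCommGroup N] [Module R N] [AddCommGroup P]
    [Module R P] (f : N →ₗ[R] P)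
    (hf : (LinearMap.ker (AlgebraTensorModule.lTensor S S f)).FG) :
    (LinearMap.ker f).FG := by
  have : Module.Finite S (LinearMap.ker (AlgebraTensorModule.lTensor S S f)) :=
    Module.Finite.iff_fg.mpr hf
  have : Module.Finite S (S ⊗[R] LinearMap.ker f) := .equiv (LinearMap.tensorKerEquiv S S f).symm
  exact Module.Finite.iff_fg.mp (.of_finite_tensorProduct_of_faithfullyFlat S)

theorem finitePresentation_descends_of_faithfullyFlat_general
    (R S M : Type*) [CommRing R] [CommRing S] [Algebra R S]
    [Module.FaithfullyFlat R S]
    [AddCommGroup M] [Module R M]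
    (h : Module.FinitePresentation S (S ⊗[R] M)) :
    Module.FinitePresentation R M := by
  have : Module.Finite R M := .of_finite_tensorProduct_of_faithfullyFlat S
  obtain ⟨n, f, hf⟩ := Module.Finite.exists_fin' R M
  refine Module.finitePresentation_of_free_of_surjective f hf ?_
  exact f.fg_ker_of_fg_ker_baseChange (S := S)
    (Module.FinitePresentation.fg_ker _ (LinearMap.lTensor_surjective S hf))

/-- Let `R` be a commutative ring and `S` a commutative `R`-algebra that is
faithfully flat as an `R`-module.  Let `M` be a finitely generated `R`-module such that
`S ⊗[R] M` is finitely presented as an `S`-module.  Then `M` is finitely presented as an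
`R`-module. -/
theorem finitePresentation_descends_of_faithfullyFlat
    (R S M : Type*) [CommRing R] [CommRing S] [Algebra R S]
    [Module.FaithfullyFlat R S]
    [AddCommGroup M] [Module R M] [Module.Finite R M]
    (h : Module.FinitePresentation S (S ⊗[R] M)) :
    Module.FinitePresentation R M :=
  finitePresentation_descends_of_faithfullyFlat_general R S M h
end

section
/- Let F be a field, u, v ∈ Fˣ with u of infinite order in Fˣ, t' = diag(u, v, 1) ∈ GL₃(F), and let G = ⟨t', U₃'⟩ be the subgroup of GL₃(F) generated by t' together with U₃'. Then U₃' is a normal subgroup of G, and every element of G can be written uniquely in the form w · (t')^m with w ∈ U₃' and m ∈ ℤ. -/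
/-!
Conjugation by `diag(a, b, 1)` rescales the entries of `1 + x E₁₃ + y E₂₃` to `(a x, b y)`, so `t'`
normalizes `U₃'` and `⟨t', U₃'⟩ = U₃' ⟨t'⟩`. The factorization `w t'^m` is unique because
`t'^k ∈ U₃'` forces `u^k = 1` (compare `(1,1)` entries), hence `k = 0` as `u` has infinite order.
-/

open Matrix

noncomputable section

variable (F : Type*) [Field F]

/-- The matrix unit with a `1` in position `(1,3)` (indices `0`, `2`). -/
def E13 : Matrix (Fin 3) (Fin 3) F := Matrix.single 0 2 1

/-- The matrix unit with a `1` in position `(2,3)` (indices `1`, `2`). -/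
def E23 : Matrix (Fin 3) (Fin 3) F := Matrix.single 1 2 1

/-- The subgroup `U₃' ≤ GL₃(F)` of matrices `1 + a • E₁₃ + b • E₂₃`, i.e. upper unitriangular
matrices with `(1,2)`-entry zero. -/
def U3' : Subgroup (GL (Fin 3) F) where
  carrier := {g | ∃ a b : F, (g : Matrix (Fin 3) (Fin 3) F) = 1 + a • E13 F + b • E23 F}
  one_mem' := ⟨0, 0, by simp⟩
  mul_mem' := by
    rintro x y ⟨a, b, hab⟩ ⟨c, d, hcd⟩
    refine ⟨a + c, b + d, ?_⟩
    have h1 : E13 F * E13 F = 0 := by simp [E13, Matrix.single_mul_single_of_ne]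
    have h2 : E13 F * E23 F = 0 := by simp [E13, E23, Matrix.single_mul_single_of_ne]
    have h3 : E23 F * E13 F = 0 := by simp [E13, E23, Matrix.single_mul_single_of_ne]
    have h4 : E23 F * E23 F = 0 := by simp [E23, Matrix.single_mul_single_of_ne]
    simp only [Units.val_mul, hab, hcd, mul_add, add_mul, smul_mul_assoc,
      mul_smul_comm, h1, h2, h3, h4, mul_one, one_mul, smul_zero]
    module
  inv_mem' := by
    rintro x ⟨a, b, hab⟩
    refine ⟨-a, -b, ?_⟩
    have h1 : E13 F * E13 F = 0 := by simp [E13, Matrix.single_mul_single_of_ne]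
    have h2 : E13 F * E23 F = 0 := by simp [E13, E23, Matrix.single_mul_single_of_ne]
    have h3 : E23 F * E13 F = 0 := by simp [E13, E23, Matrix.single_mul_single_of_ne]
    have h4 : E23 F * E23 F = 0 := by simp [E23, Matrix.single_mul_single_of_ne]
    have h : ((x : Matrix (Fin 3) (Fin 3) F)) * (1 + (-a) • E13 F + (-b) • E23 F) = 1 := by
      simp only [hab, mul_add, add_mul, smul_mul_assoc, mul_smul_comm,
        h1, h2, h3, h4, mul_one, one_mul, smul_zero]
      module
    have := Matrix.inv_eq_right_inv h
    simp [this]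

/-- The diagonal element `t' = diag(u, v, 1)` of `GL₃(F)`. -/
def T' (u v : Fˣ) : GL (Fin 3) F :=
  Matrix.GeneralLinearGroup.mkOfDetNeZero (Matrix.diagonal ![u, v, 1]) (by
    simp [Matrix.det_diagonal, Fin.prod_univ_three])

namespace Subgroup

variable {G : Type*} [Group G] {N : Subgroup G} {t : G}

theorem closure_singleton_union_eq_sup_zpowers (t : G) (N : Subgroup G) :
    closure ({t} ∪ (N : Set G)) = N ⊔ zpowers t := by
  rw [closure_union, closure_eq, ← zpowers_eq_closure, sup_comm]

theorem closure_singleton_union_le_normalizer (ht : t ∈ normalizer (N : Set G)) :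
    closure ({t} ∪ (N : Set G)) ≤ normalizer (N : Set G) :=
  closure_le _ |>.mpr <| Set.union_subset (Set.singleton_subset_iff.mpr ht) le_normalizer

theorem exists_mul_zpow_eq_of_mem_closure (ht : t ∈ normalizer (N : Set G)) {g : G}
    (hg : g ∈ closure ({t} ∪ (N : Set G))) : ∃ w : N, ∃ m : ℤ, (w : G) * t ^ m = g := by
  rw [closure_singleton_union_eq_sup_zpowers, ← SetLike.mem_coe,
    coe_mul_of_right_le_normalizer_left N _ (zpowers_le.mpr ht)] at hg
  obtain ⟨w, hw, _, ⟨m, rfl⟩, rfl⟩ := hg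
  exact ⟨⟨w, hw⟩, m, rfl⟩

theorem injective_mul_zpow (h : ∀ k : ℤ, t ^ k ∈ N → k = 0) :
    Function.Injective fun p : N × ℤ ↦ (p.1 : G) * t ^ p.2 := by
  rintro ⟨w, m⟩ ⟨w', n⟩ (heq : (w : G) * t ^ m = w' * t ^ n)
  have hzpow : t ^ (m - n) = (w : G)⁻¹ * w' := by
    rw [_root_.zpow_sub, mul_inv_eq_iff_eq_mul, mul_assoc, ← heq, inv_mul_cancel_left]
  have hmn : m = n := by
    have := h _ (hzpow ▸ mul_mem (inv_mem w.2) w'.2)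
    omega
  subst hmn
  exact Prod.ext (Subtype.ext (mul_right_cancel heq)) rfl

end Subgroup

theorem T'_mul (a b c d : Fˣ) : T' F a b * T' F c d = T' F (a * c) (b * d) := by
  ext : 1
  simp only [Units.val_mul, T', GeneralLinearGroup.val_mkOfDetNeZero, diagonal_mul_diagonal]
  congr 1
  ext i
  fin_cases i <;> simp

theorem T'_one : T' F 1 1 = 1 := by
  ext : 1
  simp only [T', GeneralLinearGroup.val_mkOfDetNeZero, Units.val_one]
  rw [← diagonal_one]
  congr 1
  ext i
  fin_cases i <;> simp

def diagHom : Fˣ × Fˣ →* GL (Fin 3) F where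
  toFun p := T' F p.1 p.2
  map_one' := T'_one F
  map_mul' _ _ := (T'_mul F _ _ _ _).symm

theorem T'_zpow (u v : Fˣ) (k : ℤ) : T' F u v ^ k = T' F (u ^ k) (v ^ k) :=
  (map_zpow (diagHom F) (u, v) k).symm

theorem T'_inv (u v : Fˣ) : (T' F u v)⁻¹ = T' F u⁻¹ v⁻¹ :=
  (map_inv (diagHom F) (u, v)).symm

theorem T'_mul_mul_T'_inv_mem {w : GL (Fin 3) F} (hw : w ∈ U3' F) (a b : Fˣ) :
    T' F a b * w * (T' F a b)⁻¹ ∈ U3' F := by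
  obtain ⟨x, y, hxy⟩ := hw
  refine ⟨a * x, b * y, ?_⟩
  rw [T'_inv, Units.val_mul, Units.val_mul, hxy]
  ext i j
  fin_cases i <;> fin_cases j <;> simp [T', E13, E23, diagonal_mul, mul_diagonal, one_apply]

theorem T'_mem_normalizer (u v : Fˣ) :
    T' F u v ∈ Subgroup.normalizer (U3' F : Set (GL (Fin 3) F)) := by
  refine Subgroup.mem_normalizer_iff.mpr fun w ↦
    ⟨fun hw ↦ T'_mul_mul_T'_inv_mem F hw u v, fun hw ↦ ?_⟩
  simpa [← T'_inv, mul_assoc] using T'_mul_mul_T'_inv_mem F hw u⁻¹ v⁻¹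

theorem eq_one_of_T'_mem {a b : Fˣ} (h : T' F a b ∈ U3' F) : a = 1 := by
  obtain ⟨x, y, hxy⟩ := h
  ext
  simpa [T', E13, E23] using congrFun (congrFun hxy 0) 0

theorem eq_zero_of_T'_zpow_mem {u : Fˣ} (hu : ¬ IsOfFinOrder u) (v : Fˣ) (k : ℤ)
    (h : T' F u v ^ k ∈ U3' F) : k = 0 := by
  rw [T'_zpow] at h
  exact injective_zpow_iff_not_isOfFinOrder.mpr hu (by simpa using eq_one_of_T'_mem F h)

/-- Let `u` have infinite order in `Fˣ`, `t' = diag(u, v, 1)`, and let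
`G = ⟨t', U₃'⟩` be the subgroup of `GL₃(F)` generated by `t'` together with `U₃'`.  Then `U₃'`
is a normal subgroup of `G`, and every element of `G` can be written uniquely as `w * t' ^ m`
with `w ∈ U₃'` and `m ∈ ℤ`. -/
theorem semidirect_decomposition (F : Type*) [Field F] (u v : Fˣ)
    (hu : ¬ IsOfFinOrder u) :
    U3' F ≤ Subgroup.closure ({T' F u v} ∪ (U3' F : Set (GL (Fin 3) F))) ∧
      (∀ g ∈ Subgroup.closure ({T' F u v} ∪ (U3' F : Set (GL (Fin 3) F))),
        ∀ w ∈ U3' F, g * w * g⁻¹ ∈ U3' F) ∧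
      ∀ g ∈ Subgroup.closure ({T' F u v} ∪ (U3' F : Set (GL (Fin 3) F))),
        ∃! p : ↥(U3' F) × ℤ, g = (p.1 : GL (Fin 3) F) * (T' F u v) ^ p.2 := by
  have hnorm := T'_mem_normalizer F u v
  refine ⟨fun w hw ↦ Subgroup.subset_closure (Or.inr hw), fun g hg w hw ↦ ?_, fun g hg ↦ ?_⟩
  · exact (Subgroup.mem_normalizer_iff.mp
      (Subgroup.closure_singleton_union_le_normalizer hnorm hg) w).mp hw
  · obtain ⟨w, m, rfl⟩ := Subgroup.exists_mul_zpow_eq_of_mem_closure hnorm hg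
    exact ⟨(w, m), rfl, fun p hp ↦
      Subgroup.injective_mul_zpow (eq_zero_of_T'_zpow_mem F hu v) hp.symm⟩
end
end

section
/- Let F be a field, u, v ∈ Fˣ, t = diag(u, 1, v⁻¹), t' = diag(u, v, 1) ∈ GL₃(F). Let H = ⟨t, U₃⟩ and G = ⟨t', U₃'⟩ be the subgroups of GL₃(F) generated by t together with U₃, respectively by t' together with U₃', and let Z be the subgroup of matrices 1 + a·E₁₃ with a ∈ F. Then Z is normal in H and the quotient group H/Z is isomorphic to G. -/
open Matrix

noncomputable section

variable (F : Type*) [Field F]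

/-- Upper unitriangular `3 × 3` matrices. -/
def IsUnitriangular (A : Matrix (Fin 3) (Fin 3) F) : Prop :=
  A 0 0 = 1 ∧ A 1 1 = 1 ∧ A 2 2 = 1 ∧ A 1 0 = 0 ∧ A 2 0 = 0 ∧ A 2 1 = 0

/-- The subgroup `U₃ ≤ GL₃(F)` of upper unitriangular matrices. -/
def U3 : Subgroup (GL (Fin 3) F) where
  carrier := {g | IsUnitriangular F (g : Matrix (Fin 3) (Fin 3) F)}
  one_mem' := by
    constructor <;> simp [IsUnitriangular]
  mul_mem' := by
    rintro a b ⟨ha1, ha2, ha3, ha4, ha5, ha6⟩ ⟨hb1, hb2, hb3, hb4, hb5, hb6⟩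
    refine ⟨?_, ?_, ?_, ?_, ?_, ?_⟩ <;>
      simp [Units.val_mul, Matrix.mul_apply, Fin.sum_univ_three,
        ha1, ha2, ha3, ha4, ha5, ha6, hb1, hb2, hb3, hb4, hb5, hb6]
  inv_mem' := by
    rintro g ⟨h1, h2, h3, h4, h5, h6⟩
    set A : Matrix (Fin 3) (Fin 3) F := (g : Matrix (Fin 3) (Fin 3) F) with hA
    have hinv : A⁻¹ = !![1, -(A 0 1), A 0 1 * A 1 2 - A 0 2; 0, 1, -(A 1 2); 0, 0, 1] := by
      apply Matrix.inv_eq_right_inv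
      ext i j
      fin_cases i <;> fin_cases j <;>
        simp [Matrix.mul_apply, Fin.sum_univ_three, Matrix.vecHead, Matrix.vecTail, h1, h2, h3, h4, h5, h6] <;> ring_nf
    have : ((g⁻¹ : GL (Fin 3) F) : Matrix (Fin 3) (Fin 3) F) = A⁻¹ := by
      simp [hA]
    refine ⟨?_, ?_, ?_, ?_, ?_, ?_⟩ <;> simp [this, hinv, Matrix.vecHead, Matrix.vecTail]

/-- The subgroup `Z ≤ GL₃(F)` of matrices `1 + a • E₁₃`, `a ∈ F` (the centre of `U₃`). -/
def ZU3 : Subgroup (GL (Fin 3) F) where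
  carrier := {g | ∃ a : F, (g : Matrix (Fin 3) (Fin 3) F) = 1 + a • E13 F}
  one_mem' := ⟨0, by simp⟩
  mul_mem' := by
    rintro x y ⟨a, ha⟩ ⟨b, hb⟩
    refine ⟨a + b, ?_⟩
    have : E13 F * E13 F = 0 := by
      simp [E13, Matrix.single_mul_single_of_ne]
    simp only [Units.val_mul, ha, hb, mul_add, add_mul, smul_mul_assoc,
      mul_smul_comm, this, mul_one, one_mul, smul_zero]
    module
  inv_mem' := by
    rintro x ⟨a, ha⟩
    refine ⟨-a, ?_⟩
    have h : ((x : Matrix (Fin 3) (Fin 3) F)) * (1 + (-a) • E13 F) = 1 := by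
      have : E13 F * E13 F = 0 := by
        simp [E13, Matrix.single_mul_single_of_ne]
      simp only [ha, mul_add, add_mul, smul_mul_assoc, mul_smul_comm, this,
        mul_one, one_mul, smul_zero]
      module
    have := Matrix.inv_eq_right_inv h
    simp [this]

/-- The diagonal element `t = diag(u, 1, v⁻¹)` of `GL₃(F)`. -/
def T (u v : Fˣ) : GL (Fin 3) F :=
  Matrix.GeneralLinearGroup.mkOfDetNeZero (Matrix.diagonal ![u, 1, (v⁻¹ : Fˣ)]) (by
    simp [Matrix.det_diagonal, Fin.prod_univ_three])

/-!
Every generator of `H` lies in the group `P` of invertible matrices `[[a,x,y],[0,1,z],[0,0,c]]`,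
and `A ↦ [[a,0,x],[0,c⁻¹,c⁻¹z],[0,0,1]]` is a homomorphism `P → GL₃(F)` with kernel `Z` which
sends `t` to `t'` and `U₃` onto `U₃'`. Restricted to `H = ⟨t, U₃⟩` it therefore has kernel `Z`
and image `⟨t', U₃'⟩`, and the first isomorphism theorem gives `H/Z ≃ G`.
-/

section GroupTheory

variable {G M : Type*} [Group G] [Group M]

theorem Subgroup.subgroupOf_closure_of_subset {K : Subgroup G} {s : Set G} (hs : s ⊆ K) :
    (closure s).subgroupOf K = closure (K.subtype ⁻¹' s) := by
  apply map_injective K.subtype_injective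
  rw [map_subgroupOf_eq_of_le ((closure_le K).2 hs), MonoidHom.map_closure,
    Set.image_preimage_eq_of_subset (by simpa using hs)]

theorem MonoidHom.range_comp_inclusion_closure {K : Subgroup G} (f : K →* M) {s : Set G}
    (hs : Subgroup.closure s ≤ K) :
    (f.comp (Subgroup.inclusion hs)).range = Subgroup.closure (f '' (K.subtype ⁻¹' s)) := by
  rw [← map_range, Subgroup.inclusion_range,
    Subgroup.subgroupOf_closure_of_subset ((Subgroup.closure_le K).1 hs), map_closure]

theorem exists_normal_quotient_mulEquiv_of_ker_range {H N : Subgroup G} {L : Subgroup M}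
    (f : H →* M) (hker : f.ker = N.subgroupOf H) (hrange : f.range = L) :
    ∃ _ : (N.subgroupOf H).Normal, Nonempty (H ⧸ N.subgroupOf H ≃* L) := by
  have : (N.subgroupOf H).Normal := hker ▸ f.normal_ker
  exact ⟨this, ⟨(QuotientGroup.quotientMulEquivOfEq hker.symm).trans
    ((QuotientGroup.quotientKerEquivRange f).trans (MulEquiv.subgroupCongr hrange))⟩⟩

end GroupTheory

lemma corners_ne_zero_of_coe_eq {g : GL (Fin 3) F} {a x y z c : F}
    (hg : (g : Matrix (Fin 3) (Fin 3) F) = !![a, x, y; 0, 1, z; 0, 0, c]) : a ≠ 0 ∧ c ≠ 0 := by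
  have hdet : (g : Matrix (Fin 3) (Fin 3) F).det = a * c := by simp [hg, det_fin_three]
  have hac : a * c ≠ 0 := hdet ▸ (g.isUnit.map detMonoidHom).ne_zero
  exact ⟨left_ne_zero_of_mul hac, right_ne_zero_of_mul hac⟩

def upperTriangularMidOne : Subgroup (GL (Fin 3) F) where
  carrier := {g | ∃ a x y z c : F,
    (g : Matrix (Fin 3) (Fin 3) F) = !![a, x, y; 0, 1, z; 0, 0, c]}
  one_mem' := ⟨1, 0, 0, 0, 1, one_fin_three⟩
  mul_mem' := by
    rintro g h ⟨a, x, y, z, c, hg⟩ ⟨a', x', y', z', c', hh⟩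
    exact ⟨a * a', a * x' + x, a * y' + x * z' + y * c', z' + z * c', c * c', by
      simp [hg, hh, add_assoc]⟩
  inv_mem' := by
    rintro g ⟨a, x, y, z, c, hg⟩
    obtain ⟨ha, hc⟩ := corners_ne_zero_of_coe_eq F hg
    refine ⟨a⁻¹, -(a⁻¹ * x), a⁻¹ * (x * z - y) * c⁻¹, -(z * c⁻¹), c⁻¹, ?_⟩
    rw [coe_units_inv, hg]
    apply inv_eq_right_inv
    simp [one_fin_three, ← mul_assoc, ha, hc]
    ring

lemma one_add_smul_E13 (t : F) : 1 + t • E13 F = !![1, 0, t; 0, 1, 0; 0, 0, 1] := by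
  ext i j; fin_cases i <;> fin_cases j <;> simp [E13, single]

lemma one_add_smul_E13_add_smul_E23 (a b : F) :
    1 + a • E13 F + b • E23 F = !![1, 0, a; 0, 1, b; 0, 0, 1] := by
  ext i j; fin_cases i <;> fin_cases j <;> simp [E13, E23, single]

lemma mem_U3_iff {g : GL (Fin 3) F} :
    g ∈ U3 F ↔ ∃ x y z : F, (g : Matrix (Fin 3) (Fin 3) F) = !![1, x, y; 0, 1, z; 0, 0, 1] := by
  constructor
  · rintro ⟨h00, h11, h22, h10, h20, h21⟩
    set A := (g : Matrix (Fin 3) (Fin 3) F)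
    refine ⟨A 0 1, A 0 2, A 1 2, ?_⟩
    conv_lhs => rw [eta_fin_three A]
    rw [h00, h11, h22, h10, h20, h21]
  · rintro ⟨x, y, z, hg⟩
    simp [U3, IsUnitriangular, hg]

lemma ZU3_le_U3 : ZU3 F ≤ U3 F := by
  rintro g ⟨t, hg⟩
  exact (mem_U3_iff F).2 ⟨0, t, 0, by rw [hg, one_add_smul_E13]⟩

lemma U3_le_upperTriangularMidOne : U3 F ≤ upperTriangularMidOne F := by
  intro g hg
  obtain ⟨x, y, z, hg⟩ := (mem_U3_iff F).1 hg
  exact ⟨1, x, y, z, 1, hg⟩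

lemma T_mem_upperTriangularMidOne (u v : Fˣ) : T F u v ∈ upperTriangularMidOne F :=
  ⟨u, 0, 0, 0, (v⁻¹ : Fˣ), diagonal_vec3 _ _ _⟩

/-- On `upperTriangularMidOne` this keeps the affine maps `p ↦ a p + x` and `q ↦ c⁻¹ (q + z)`
read off from `A`, which compose as `A` does, and forgets the entry `y`. -/
def collapseZ (A : Matrix (Fin 3) (Fin 3) F) : Matrix (Fin 3) (Fin 3) F :=
  !![A 0 0, 0, A 0 1; 0, (A 2 2)⁻¹, (A 2 2)⁻¹ * A 1 2; 0, 0, 1]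

def collapseZHom : upperTriangularMidOne F →* GL (Fin 3) F :=
  MonoidHom.toHomUnits
    { toFun := fun g => collapseZ F (g : GL (Fin 3) F)
      map_one' := by simp [collapseZ, one_fin_three]
      map_mul' := by
        rintro ⟨g, a, x, y, z, c, hg⟩ ⟨h, a', x', y', z', c', hh⟩
        have hc' := (corners_ne_zero_of_coe_eq F hh).2
        simp [collapseZ, hg, hh]
        field_simp
        trivial }

lemma coe_collapseZHom (g : upperTriangularMidOne F) :
    ((collapseZHom F g : GL (Fin 3) F) : Matrix (Fin 3) (Fin 3) F) =
      collapseZ F (g : GL (Fin 3) F) :=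
  rfl

lemma collapseZHom_eq_one_iff (g : upperTriangularMidOne F) :
    collapseZHom F g = 1 ↔ (g : GL (Fin 3) F) ∈ ZU3 F := by
  obtain ⟨g, a, x, y, z, c, hg⟩ := g
  have hc := (corners_ne_zero_of_coe_eq F hg).2
  rw [← Units.val_inj, coe_collapseZHom]
  show _ ↔ ∃ t : F, _ = 1 + t • E13 F
  simp only [one_add_smul_E13]
  simp [collapseZ, hg, one_fin_three, hc, and_comm]

lemma collapseZHom_T (u v : Fˣ) :
    collapseZHom F ⟨T F u v, T_mem_upperTriangularMidOne F u v⟩ = T' F u v := by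
  ext1
  rw [coe_collapseZHom]
  show collapseZ F (diagonal _) = diagonal _
  simp [collapseZ, diagonal_vec3]

lemma map_collapseZHom_U3 :
    ((U3 F).subgroupOf (upperTriangularMidOne F)).map (collapseZHom F) = U3' F := by
  ext g
  constructor
  · rintro ⟨h, hU, rfl⟩
    rw [SetLike.mem_coe, Subgroup.mem_subgroupOf] at hU
    obtain ⟨x, y, z, hh⟩ := (mem_U3_iff F).1 hU
    refine ⟨x, z, ?_⟩
    rw [coe_collapseZHom, one_add_smul_E13_add_smul_E23]
    simp [collapseZ, hh]
  · rintro ⟨a, b, hg⟩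
    let h : GL (Fin 3) F :=
      GeneralLinearGroup.mkOfDetNeZero !![1, a, 0; 0, 1, b; 0, 0, 1] (by simp [det_fin_three])
    have hU : h ∈ U3 F := (mem_U3_iff F).2 ⟨a, 0, b, rfl⟩
    refine ⟨⟨h, U3_le_upperTriangularMidOne F hU⟩, hU, ?_⟩
    ext1
    rw [coe_collapseZHom, hg, one_add_smul_E13_add_smul_E23]
    simp [collapseZ, h]

lemma closure_T_U3_le_upperTriangularMidOne (u v : Fˣ) :
    Subgroup.closure ({T F u v} ∪ (U3 F : Set (GL (Fin 3) F))) ≤ upperTriangularMidOne F :=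
  (Subgroup.closure_le _).2 <| Set.union_subset
    (Set.singleton_subset_iff.2 (T_mem_upperTriangularMidOne F u v))
    (U3_le_upperTriangularMidOne F)

lemma image_collapseZHom_T_U3 (u v : Fˣ) :
    collapseZHom F '' ((upperTriangularMidOne F).subtype ⁻¹'
        ({T F u v} ∪ (U3 F : Set (GL (Fin 3) F)))) =
      {T' F u v} ∪ (U3' F : Set (GL (Fin 3) F)) := by
  have hT : (upperTriangularMidOne F).subtype ⁻¹' {T F u v} =
      {⟨T F u v, T_mem_upperTriangularMidOne F u v⟩} := by
    ext; simp [Subtype.ext_iff]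
  rw [Set.preimage_union, Set.image_union, hT, Set.image_singleton, collapseZHom_T,
    ← Subgroup.coe_subgroupOf, ← Subgroup.coe_map, map_collapseZHom_U3]

/-- Let `t = diag(u, 1, v⁻¹)`, `t' = diag(u, v, 1)`,
`H = ⟨t, U₃⟩`, `G = ⟨t', U₃'⟩`, and `Z` the subgroup of matrices `1 + a • E₁₃`.  Then `Z` is
normal in `H` and the quotient group `H/Z` is isomorphic to `G`. -/
theorem quotient_iso (F : Type*) [Field F] (u v : Fˣ) :
    ZU3 F ≤ Subgroup.closure ({T F u v} ∪ (U3 F : Set (GL (Fin 3) F))) ∧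
      ∃ _ : ((ZU3 F).subgroupOf
          (Subgroup.closure ({T F u v} ∪ (U3 F : Set (GL (Fin 3) F))))).Normal,
        Nonempty
          ((↥(Subgroup.closure ({T F u v} ∪ (U3 F : Set (GL (Fin 3) F)))) ⧸
              (ZU3 F).subgroupOf
                (Subgroup.closure ({T F u v} ∪ (U3 F : Set (GL (Fin 3) F))))) ≃*
            ↥(Subgroup.closure ({T' F u v} ∪ (U3' F : Set (GL (Fin 3) F))))) := by
  let φ := (collapseZHom F).comp (Subgroup.inclusion (closure_T_U3_le_upperTriangularMidOne F u v))
  have hker : φ.ker = (ZU3 F).subgroupOf _ := by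
    ext g
    exact collapseZHom_eq_one_iff F _
  have hrange : φ.range = Subgroup.closure ({T' F u v} ∪ (U3' F : Set (GL (Fin 3) F))) := by
    rw [MonoidHom.range_comp_inclusion_closure, image_collapseZHom_T_U3]
  have hZ : ZU3 F ≤ Subgroup.closure ({T F u v} ∪ (U3 F : Set (GL (Fin 3) F))) :=
    (ZU3_le_U3 F).trans <|
      Subgroup.subset_closure.trans (Subgroup.closure_mono Set.subset_union_right)
  exact ⟨hZ, exists_normal_quotient_mulEquiv_of_ker_range φ hker hrange⟩
end
end

section
/- Let k be a field, n ≥ 1, and let R = k[[s₀,…,s_{n−1}, t₀,…,t_{n−1}]] be the ring of formal power series over k in 2n variables. For integers a, b ≥ 2, the element s₀·t₀ does not lie in the ideal (s₀ᵃ,…,s_{n−1}ᵃ)·(t₀,…,t_{n−1}) + (s₀,…,s_{n−1})·(t₀ᵇ,…,t_{n−1}ᵇ) of R, where · denotes the product of ideals. -/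
/-!
Let `m` be the exponent of `s₀ t₀`. The power series all of whose coefficients at exponents
`≤ m` vanish form an ideal (`MvPowerSeries.LinearTopology.basis` with zero coefficient ideal).
Every `sᵢᵃ` and `tⱼᵇ` lies in it, since all entries of `m` are at most `1 < a, b`; hence so
does `(sᵃ)·(t) + (s)·(tᵇ)`, while `s₀ t₀ = monomial m 1` does not.
-/

open MvPowerSeries MvPowerSeries.LinearTopology

namespace MvPowerSeries

variable {σ R : Type*} [Ring R]

theorem monomial_mem_basis_bot {d e : σ →₀ ℕ} {i : σ} (hi : d i < e i) (c : R) :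
    monomial e c ∈ (basis σ R (⊥, d)).asIdeal := by
  classical
  rw [TwoSidedIdeal.mem_asIdeal, mem_basis_iff]
  intro f hf
  rw [coeff_monomial, if_neg (by rintro rfl; exact (hi.trans_le (hf i)).false)]
  exact zero_mem _

theorem X_pow_mem_basis_bot {d : σ →₀ ℕ} {i : σ} {n : ℕ} (hi : d i < n) :
    (X i : MvPowerSeries σ R) ^ n ∈ (basis σ R (⊥, d)).asIdeal := by
  rw [X_pow_eq]
  exact monomial_mem_basis_bot (i := i) (by simpa using hi) 1

theorem monomial_not_mem_basis_bot (d : σ →₀ ℕ) {c : R} (hc : c ≠ 0) :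
    monomial d c ∉ (basis σ R (⊥, d)).asIdeal := by
  rw [TwoSidedIdeal.mem_asIdeal, mem_basis_iff]
  intro h
  simpa [hc] using h d le_rfl

end MvPowerSeries

/-- Let `k` be a field, `n ≥ 1`, and let
`R = k[[s₀,…,s_{n−1}, t₀,…,t_{n−1}]]` be the ring of formal power series over `k` in `2n`
variables.  For integers `a, b ≥ 2`, the element `s₀ * t₀` does not lie in the ideal
`(s₀ᵃ,…,s_{n−1}ᵃ)·(t₀,…,t_{n−1}) + (s₀,…,s_{n−1})·(t₀ᵇ,…,t_{n−1}ᵇ)` of `R`. -/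
theorem st_not_mem_ideal (k : Type*) [Field k] (n : ℕ) (hn : 1 ≤ n)
    (a b : ℕ) (ha : 2 ≤ a) (hb : 2 ≤ b) :
    letI R := MvPowerSeries (Fin n ⊕ Fin n) k
    letI s : Fin n → R := fun i => MvPowerSeries.X (Sum.inl i)
    letI t : Fin n → R := fun i => MvPowerSeries.X (Sum.inr i)
    s ⟨0, hn⟩ * t ⟨0, hn⟩ ∉
      Ideal.span (Set.range fun i => s i ^ a) * Ideal.span (Set.range t) +
        Ideal.span (Set.range s) * Ideal.span (Set.range fun i => t i ^ b) := by
  set m : Fin n ⊕ Fin n →₀ ℕ := .single (.inl ⟨0, hn⟩) 1 + .single (.inr ⟨0, hn⟩) 1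
  have hm : ∀ x, m x ≤ 1 := by
    rintro (i | i) <;> simp only [m, Finsupp.add_apply, Finsupp.single_apply] <;> split_ifs <;>
      simp_all
  set I := (basis (Fin n ⊕ Fin n) k (⊥, m)).asIdeal
  have hs : ∀ i, (X (.inl i) : MvPowerSeries _ k) ^ a ∈ I :=
    fun i => X_pow_mem_basis_bot (by linarith [hm (.inl i)])
  have ht : ∀ i, (X (.inr i) : MvPowerSeries _ k) ^ b ∈ I :=
    fun i => X_pow_mem_basis_bot (by linarith [hm (.inr i)])
  have hst : (X (.inl ⟨0, hn⟩) * X (.inr ⟨0, hn⟩) : MvPowerSeries _ k) = monomial m 1 := by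
    rw [X, X, monomial_mul_monomial, mul_one]
  rw [hst]
  exact fun h => monomial_not_mem_basis_bot m one_ne_zero <| SetLike.le_def.1
    (sup_le (Ideal.mul_le_left.trans (Ideal.span_le.2 (Set.range_subset_iff.2 hs)))
      (Ideal.mul_le_right.trans (Ideal.span_le.2 (Set.range_subset_iff.2 ht)))) h
end
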